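/- arXiv:2107.00888 — 6 statements merged into one kernel-verified Lean document; each statement's English description precedes it below -/
import Mathlib

section
/- Let A : ℕ → ℝ satisfy A 1 = 0, A 2 = 1, and A (l+1) = -∑_{i=1}^{l} A i * A (l+1-i) for l ≥ 2. Then A l = 0 for all odd l ≥ 1, and A (2k) = (-1)^(k-1) * catalan (k-1) for all k ≥ 1. -/
/-!
The recursion determines a sequence from its values at `1` and `2`, so it suffices to check it
for the signed Catalan sequence, `0` at odd indices and `(-1)^(k-1) * catalan (k-1)` at `2k`.
For odd `l + 1` each product `A i * A (l + 1 - i)` has a factor of odd index; for `l + 1 = 2k`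
only even `i` contribute, and the sum becomes `(-1)^k` times the Catalan convolution
`∑ catalan j * catalan (k - 2 - j) = catalan (k - 1)`.
-/

open Finset

section QuadraticRecursion

variable {R : Type*} [Ring R]

def SatisfiesQuadraticRecursion (A : ℕ → R) : Prop :=
  ∀ l, 2 ≤ l → A (l + 1) = -(∑ i ∈ Icc 1 l, A i * A (l + 1 - i))

theorem SatisfiesQuadraticRecursion.eqOn_Ici_one {A B : ℕ → R}
    (hA : SatisfiesQuadraticRecursion A) (hB : SatisfiesQuadraticRecursion B)
    (h1 : A 1 = B 1) (h2 : A 2 = B 2) : Set.EqOn A B (Set.Ici 1) := by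
  intro n hn
  induction n using Nat.strong_induction_on with
  | _ n ih =>
    match n, hn with
    | 1, _ => exact h1
    | 2, _ => exact h2
    | l + 3, _ =>
      rw [hA (l + 2) (by omega), hB (l + 2) (by omega)]
      congr 1
      refine sum_congr rfl fun i hi => ?_
      rw [mem_Icc] at hi
      rw [ih i (by omega) hi.1, ih (l + 2 + 1 - i) (by omega) (show 1 ≤ _ by omega)]

end QuadraticRecursion

theorem sum_Icc_one_two_mul_add_one_of_odd {M : Type*} [AddCommMonoid M] (f : ℕ → M)
    (hf : ∀ i, Odd i → f i = 0) (m : ℕ) :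
    ∑ i ∈ Icc 1 (2 * m + 1), f i = ∑ j ∈ range m, f (2 * j + 2) := by
  induction m with
  | zero => simp [hf 1 odd_one]
  | succ m ih =>
    rw [show 2 * (m + 1) + 1 = 2 * m + 1 + 1 + 1 by ring, sum_Icc_succ_top (by omega),
      sum_Icc_succ_top (by omega), ih, sum_range_succ, hf (2 * m + 2 + 1) (by simp [parity_simps]),
      add_zero]

theorem catalan_succ_eq_sum_range (n : ℕ) :
    catalan (n + 1) = ∑ j ∈ range (n + 1), catalan j * catalan (n - j) := by
  rw [catalan_succ, Fin.sum_univ_eq_sum_range (fun j => catalan j * catalan (n - j))]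

section SignedCatalan

variable (R : Type*) [CommRing R]

/-- At `n = 0` this is `1`, not `0`; only positive indices enter the recursion. -/
def signedCatalan (n : ℕ) : R :=
  if Odd n then 0 else (-1) ^ (n / 2 - 1) * catalan (n / 2 - 1)

variable {R}

theorem signedCatalan_of_odd {n : ℕ} (hn : Odd n) : signedCatalan R n = 0 := if_pos hn

theorem signedCatalan_two_mul (k : ℕ) :
    signedCatalan R (2 * k) = (-1) ^ (k - 1) * catalan (k - 1) := by
  simp [signedCatalan]

theorem signedCatalan_two_mul_add_two (k : ℕ) :
    signedCatalan R (2 * k + 2) = (-1) ^ k * catalan k := by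
  simpa [mul_add] using signedCatalan_two_mul (R := R) (k + 1)

theorem signedCatalan_mul_signedCatalan_of_odd_add {i j : ℕ} (h : Odd (i + j)) :
    signedCatalan R i * signedCatalan R j = 0 := by
  rcases Nat.even_or_odd i with hi | hi
  · rw [signedCatalan_of_odd (n := j) ((Nat.odd_add'.1 h).2 hi), mul_zero]
  · rw [signedCatalan_of_odd hi, zero_mul]

theorem satisfiesQuadraticRecursion_signedCatalan :
    SatisfiesQuadraticRecursion (signedCatalan R) := by
  intro l hl
  obtain ⟨m, rfl | rfl⟩ := Nat.even_or_odd' l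
  · rw [signedCatalan_of_odd (by simp), eq_comm, neg_eq_zero]
    refine sum_eq_zero fun i hi => signedCatalan_mul_signedCatalan_of_odd_add ?_
    rw [Nat.add_sub_cancel' (by grind)]
    exact odd_two_mul_add_one m
  · obtain ⟨n, rfl⟩ : ∃ n, m = n + 1 := ⟨m - 1, by omega⟩
    rw [sum_Icc_one_two_mul_add_one_of_odd _ fun i hi => by rw [signedCatalan_of_odd hi, zero_mul]]
    have hterm : ∀ j ∈ range (n + 1),
        signedCatalan R (2 * j + 2) * signedCatalan R (2 * (n + 1) + 1 + 1 - (2 * j + 2)) =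
          (-1) ^ n * (catalan j * catalan (n - j) : ℕ) := by
      intro j hj
      rw [mem_range] at hj
      rw [show 2 * (n + 1) + 1 + 1 - (2 * j + 2) = 2 * (n - j) + 2 by omega,
        signedCatalan_two_mul_add_two, signedCatalan_two_mul_add_two,
        show n = j + (n - j) by omega, pow_add]
      push_cast
      simp only [Nat.add_sub_cancel_left]
      ring
    rw [sum_congr rfl hterm, ← mul_sum, ← Nat.cast_sum, ← catalan_succ_eq_sum_range,
      show 2 * (n + 1) + 1 + 1 = 2 * (n + 1) + 2 by ring, signedCatalan_two_mul_add_two, pow_succ]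
    ring

end SignedCatalan

theorem stmt_1 (A : ℕ → ℝ)
    (hA1 : A 1 = 0) (hA2 : A 2 = 1)
    (hrec : ∀ l, 2 ≤ l → A (l + 1) = -(∑ i ∈ Finset.Icc 1 l, A i * A (l + 1 - i))) :
    (∀ l, 1 ≤ l → Odd l → A l = 0) ∧
      (∀ k, 1 ≤ k → A (2 * k) = (-1 : ℝ) ^ (k - 1) * (catalan (k - 1) : ℝ)) := by
  have hA : Set.EqOn A (signedCatalan ℝ) (Set.Ici 1) :=
    SatisfiesQuadraticRecursion.eqOn_Ici_one hrec satisfiesQuadraticRecursion_signedCatalan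
      (by simp [hA1, signedCatalan]) (by simp [hA2, signedCatalan])
  exact ⟨fun l hl hodd => (hA hl).trans (signedCatalan_of_odd hodd),
    fun k hk => (hA (show 1 ≤ 2 * k by omega)).trans (signedCatalan_two_mul k)⟩
end

section
/- With F, m, n, x, S as in the context, the matrix S * S is a scalar multiple of the identity; specifically every diagonal entry of S * S equals (n-1)(x+1)²/(4x) and every off-diagonal entry of S * S equals 0. -/
/-! Tightness makes `G = Fᴴ F` satisfy `G² = (n/m) G`, so `G - (n/(2m)) I` squares to
`(n/(2m))² I`; the normalising factor `√((n-1)/x)` then turns `(n/(2m))²` into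
`(n-1)(x+1)²/(4x)`, because `x + 1 = n/m`. -/

theorem Matrix.mul_mul_mul_eq_smul_of_mul_eq_smul_one {l k R : Type*} [Fintype l] [Fintype k]
    [DecidableEq k] [CommSemiring R] {A : Matrix l k R} {B : Matrix k l R} {c : R}
    (h : B * A = c • 1) : A * B * (A * B) = c • (A * B) := by
  rw [Matrix.mul_assoc, ← Matrix.mul_assoc B, h, Matrix.smul_mul, Matrix.one_mul,
    Matrix.mul_smul]

theorem sub_smul_one_mul_self {R A : Type*} [CommRing R] [Ring A] [Algebra R A] {g : A} {a : R}
    (h : g * g = (2 * a) • g) : (g - a • 1) * (g - a • 1) = (a * a) • 1 := by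
  simp only [sub_mul, mul_sub, h, smul_mul_assoc, mul_smul_comm, one_mul, mul_one, smul_sub,
    smul_smul, two_mul, add_smul]
  abel

theorem etf_normalisation_sq {m n : ℕ} {x : ℝ} (hm : 0 < m) (hmn : m < n)
    (hx : x = ((n : ℝ) - m) / m) :
    √(((n : ℝ) - 1) / x) ^ 2 * ((n : ℝ) / (2 * m)) ^ 2 = ((n : ℝ) - 1) * (x + 1) ^ 2 / (4 * x) := by
  have hmR : (0 : ℝ) < m := Nat.cast_pos.2 hm
  have hx0 : 0 < x := hx ▸ div_pos (sub_pos.2 (Nat.cast_lt.2 hmn)) hmR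
  have hn1 : (1 : ℝ) ≤ n := Nat.one_le_cast.2 (hm.trans hmn)
  have hxm : x + 1 = n / m := by rw [hx]; field_simp; ring
  rw [Real.sq_sqrt (div_nonneg (by linarith) hx0.le), hxm]
  field_simp
  ring

theorem stmt_6_general (m n : ℕ) (hm : 0 < m) (hmn : m < n)
    (F : Matrix (Fin m) (Fin n) ℂ)
    (htight : F * F.conjTranspose = ((n : ℂ) / m) • 1)
    (x : ℝ) (hx : x = ((n : ℝ) - m) / m)
    (S : Matrix (Fin n) (Fin n) ℂ)
    (hS : S = ((Real.sqrt (((n : ℝ) - 1) / x) : ℝ) : ℂ) •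
      (F.conjTranspose * F - ((n : ℂ) / (2 * m)) • 1)) :
    (∀ i, (S * S) i i = ((((n : ℝ) - 1) * (x + 1) ^ 2 / (4 * x) : ℝ) : ℂ)) ∧
      ∀ i j : Fin n, i ≠ j → (S * S) i j = 0 := by
  have hgram := Matrix.mul_mul_mul_eq_smul_of_mul_eq_smul_one htight
  rw [show (n : ℂ) / m = 2 * (n / (2 * m)) by ring] at hgram
  have hscalar := etf_normalisation_sq hm hmn hx
  have hSS : S * S = ((((n : ℝ) - 1) * (x + 1) ^ 2 / (4 * x) : ℝ) : ℂ) • 1 := by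
    rw [hS, Matrix.smul_mul, Matrix.mul_smul, smul_smul, sub_smul_one_mul_self hgram, smul_smul,
      ← hscalar]
    push_cast
    ring_nf
  refine ⟨fun i => by simp [hSS], fun i j hij => by simp [hSS, hij]⟩

theorem stmt_6 (m n : ℕ) (hm : 0 < m) (hmn : m < n)
    (F : Matrix (Fin m) (Fin n) ℂ)
    (hunit : ∀ j, (F.conjTranspose * F) j j = 1)
    (htight : F * F.conjTranspose = ((n : ℂ) / m) • 1)
    (hequi : ∀ i j : Fin n, i ≠ j →
      ‖(F.conjTranspose * F) i j‖ ^ 2 = ((n : ℝ) - m) / (m * ((n : ℝ) - 1)))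
    (x : ℝ) (hx : x = ((n : ℝ) - m) / m)
    (S : Matrix (Fin n) (Fin n) ℂ)
    (hS : S = ((Real.sqrt (((n : ℝ) - 1) / x) : ℝ) : ℂ) •
      (F.conjTranspose * F - ((n : ℂ) / (2 * m)) • 1)) :
    (∀ i, (S * S) i i = ((((n : ℝ) - 1) * (x + 1) ^ 2 / (4 * x) : ℝ) : ℂ)) ∧
      ∀ i j : Fin n, i ≠ j → (S * S) i j = 0 :=
  stmt_6_general m n hm hmn F htight x hx S hS
end

section
/- If n = 2m (aspect ratio γ = 1/2), then x = 1, s = 0, and S = √(n-1) • (Fᴴ F - I_n), which satisfies Sᴴ S = (n-1) • I_n, all diagonal entries of S are 0, and all off-diagonal entries have modulus 1 (i.e., S is a complex conference matrix). -/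
/-!
For an equiangular tight frame with `n = 2m`, the Gram matrix `G = Fᴴ F` satisfies `G² = 2G`
because `F Fᴴ = 2`, so `G - 1` is a Hermitian involution and `√(n-1) • (G - 1)` is `√(n-1)`
times a unitary. Its diagonal vanishes since the columns have unit norm, and off the diagonal
`|G i j|²` equals the Welch bound `(n-m)/(m(n-1)) = 1/(n-1)`.
-/

namespace Matrix

variable {ι κ R : Type*} [Fintype ι] [Fintype κ]

theorem conjTranspose_mul_self_mul_self_of_mul_conjTranspose_eq_smul_one
    [CommRing R] [StarRing R] [DecidableEq ι] {A : Matrix ι κ R} {c : R}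
    (h : A * Aᴴ = c • 1) :
    Aᴴ * A * (Aᴴ * A) = c • (Aᴴ * A) := by
  rw [Matrix.mul_assoc, ← Matrix.mul_assoc A, h, Matrix.smul_mul, Matrix.one_mul,
    Matrix.mul_smul]

theorem sub_one_mul_sub_one_of_mul_self_eq_two_smul [CommRing R] [DecidableEq κ]
    {G : Matrix κ κ R} (h : G * G = (2 : R) • G) : (G - 1) * (G - 1) = 1 := by
  rw [sub_mul, mul_sub, mul_sub, h, two_smul, Matrix.mul_one, Matrix.one_mul, Matrix.mul_one]
  abel

theorem conjTranspose_ofReal_smul_mul_self {c : ℝ} {A : Matrix κ κ ℂ} (hA : A.IsHermitian) :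
    ((c : ℂ) • A)ᴴ * ((c : ℂ) • A) = ((c ^ 2 : ℝ) : ℂ) • (A * A) := by
  rw [conjTranspose_smul, hA.eq, Complex.star_def, Complex.conj_ofReal, smul_mul_smul_comm,
    Complex.ofReal_pow, sq]

end Matrix

theorem stmt_7 (m n : ℕ) (hm : 0 < m) (hn : n = 2 * m)
    (F : Matrix (Fin m) (Fin n) ℂ)
    (hunit : ∀ j, (F.conjTranspose * F) j j = 1)
    (htight : F * F.conjTranspose = ((n : ℂ) / m) • 1)
    (hequi : ∀ i j : Fin n, i ≠ j →
      ‖(F.conjTranspose * F) i j‖ ^ 2 = ((n : ℝ) - m) / (m * ((n : ℝ) - 1)))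
    (x : ℝ) (hx : x = ((n : ℝ) - m) / m)
    (S : Matrix (Fin n) (Fin n) ℂ)
    (hS : S = ((Real.sqrt (((n : ℝ) - 1) / x) : ℝ) : ℂ) •
      (F.conjTranspose * F - ((n : ℂ) / (2 * m)) • 1)) :
    x = 1 ∧ (1 - x) / (2 * Real.sqrt x) = 0 ∧
      S = ((Real.sqrt ((n : ℝ) - 1) : ℝ) : ℂ) • (F.conjTranspose * F - 1) ∧
      S.conjTranspose * S = ((((n : ℝ) - 1 : ℝ) : ℂ)) • 1 ∧
      (∀ i, S i i = 0) ∧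
      (∀ i j : Fin n, i ≠ j → ‖S i j‖ = 1) := by
  subst hn
  have hmC : (m : ℂ) ≠ 0 := Nat.cast_ne_zero.mpr hm.ne'
  have hn1 : (0 : ℝ) < ((2 * m : ℕ) : ℝ) - 1 := by
    push_cast; linarith [(Nat.one_le_cast (α := ℝ)).mpr hm]
  have hx1 : x = 1 := by rw [hx]; push_cast; field_simp; ring
  set G := F.conjTranspose * F
  set c := Real.sqrt (((2 * m : ℕ) : ℝ) - 1)
  have hshift : ((2 * m : ℕ) : ℂ) / (2 * m) = 1 := by push_cast; field_simp
  have hS' : S = (c : ℂ) • (G - 1) := by rw [hS, hx1, div_one, hshift, one_smul]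
  have hG : G * G = (2 : ℂ) • G :=
    Matrix.conjTranspose_mul_self_mul_self_of_mul_conjTranspose_eq_smul_one
      (htight.trans (by congr 1; push_cast; field_simp))
  refine ⟨hx1, by simp [hx1], hS', ?_, fun i ↦ by simp [hS', hunit i], fun i j hij ↦ ?_⟩
  · rw [hS', Matrix.conjTranspose_ofReal_smul_mul_self (Matrix.isHermitian_conjTranspose_mul_self F
      |>.sub Matrix.isHermitian_one), Matrix.sub_one_mul_sub_one_of_mul_self_eq_two_smul hG,
      Real.sq_sqrt hn1.le]
  · have hSij : ‖S i j‖ = c * ‖G i j‖ := by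
      rw [hS', Matrix.smul_apply, Matrix.sub_apply, Matrix.one_apply_ne hij, sub_zero, smul_eq_mul,
        norm_mul, Complex.norm_real, Real.norm_of_nonneg (Real.sqrt_nonneg _)]
    rw [hSij, ← pow_eq_one_iff_of_nonneg (by positivity) two_ne_zero, mul_pow, hequi i j hij,
      Real.sq_sqrt hn1.le]
    field_simp
    push_cast
    ring
end

section
/- Let S be an n × n Hermitian complex matrix with constant diagonal entries √(n-1)·s, off-diagonal entries of modulus 1, and S² = ((n-1)(x+1)²/(4x)) • I where s = (1-x)/(2√x), x > 0. Let P be diagonal with i.i.d. Bernoulli(p) entries. Then E[trace((PSP)²)] = n(n-1)s²p + n(n-1)p², so the normalized second moment (1/n²)·E[trace((PSP)²)] → s²p + p² as n → ∞. -/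
/-- The diagonal 0/1 selection matrix for an outcome `ε`. -/
def selMatrix (n : ℕ) (ε : Fin n → Bool) : Matrix (Fin n) (Fin n) ℂ :=
  Matrix.diagonal fun i => if ε i then (1 : ℂ) else 0

/-- Expectation over independent Bernoulli(p) diagonal entries of a ℂ-valued
functional of the outcome. -/
noncomputable def bernExp (n : ℕ) (p : ℝ) (f : (Fin n → Bool) → ℂ) : ℂ :=
  ∑ ε : Fin n → Bool, ((∏ i, if ε i then p else 1 - p : ℝ) : ℂ) * f ε

/-!
Expanding the trace, `tr((PSP)²) = ∑ᵢⱼ εᵢ εⱼ Sᵢⱼ Sⱼᵢ`. The coordinates are independent, so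
`E[εᵢ εⱼ] = p ^ #{i, j}`, i.e. `p` on the diagonal and `p²` off it, while hermiticity turns
`Sᵢⱼ Sⱼᵢ` into `‖Sᵢⱼ‖²`, which is `(n - 1) s²` on the diagonal and `1` off it.
-/

open Finset Filter Topology

namespace bernExp

variable {n : ℕ} {p : ℝ}

lemma sum_apply {ι : Type*} (s : Finset ι) (f : ι → (Fin n → Bool) → ℂ) :
    bernExp n p (fun ε => ∑ i ∈ s, f i ε) = ∑ i ∈ s, bernExp n p (f i) := by
  simp only [bernExp, mul_sum]
  exact sum_comm

lemma mul_const (f : (Fin n → Bool) → ℂ) (c : ℂ) :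
    bernExp n p (fun ε => f ε * c) = bernExp n p f * c := by
  simp only [bernExp, sum_mul, mul_assoc]

lemma prod_apply (f : Fin n → Bool → ℂ) :
    bernExp n p (fun ε => ∏ k, f k (ε k)) = ∏ k, (p * f k true + (1 - p) * f k false) := by
  have factor : ∀ k, (p * f k true + (1 - p) * f k false : ℂ) =
      ∑ b : Bool, ((if b then p else 1 - p : ℝ) : ℂ) * f k b := fun k => by simp
  simp only [factor, Fintype.prod_sum, bernExp, Complex.ofReal_prod, ← prod_mul_distrib]

lemma ite_forall_mem (T : Finset (Fin n)) :
    bernExp n p (fun ε => if ∀ k ∈ T, ε k then 1 else 0) = (p : ℂ) ^ T.card := by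
  have ite_eq_prod : ∀ ε : Fin n → Bool, (if ∀ k ∈ T, ε k then (1 : ℂ) else 0) =
      ∏ k, if k ∈ T then (if ε k then 1 else 0) else 1 := fun ε => by
    simp [prod_ite_mem, prod_boole]
  rw [funext ite_eq_prod, prod_apply fun k b => if k ∈ T then (if b then 1 else 0) else 1]
  calc _ = ∏ k, if k ∈ T then (p : ℂ) else 1 :=
        prod_congr rfl fun k _ => by by_cases hk : k ∈ T <;> simp [hk]
    _ = _ := by rw [prod_ite_mem, univ_inter, prod_const]

lemma ite_and (i j : Fin n) :
    bernExp n p (fun ε => if ε i ∧ ε j then 1 else 0) = (p : ℂ) ^ ({i, j} : Finset _).card := by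
  rw [← ite_forall_mem]
  simp

end bernExp

lemma selMatrix_mul_mul_selMatrix_apply {n : ℕ} (ε : Fin n → Bool) (A : Matrix (Fin n) (Fin n) ℂ)
    (i j : Fin n) :
    (selMatrix n ε * A * selMatrix n ε) i j = if ε i ∧ ε j then A i j else 0 := by
  by_cases hi : ε i <;> by_cases hj : ε j <;> simp [selMatrix, hi, hj]

lemma Matrix.trace_sq {ι R : Type*} [Fintype ι] [DecidableEq ι] [Semiring R] (M : Matrix ι ι R) :
    (M ^ 2).trace = ∑ i, ∑ j, M i j * M j i := by
  simp only [sq, Matrix.trace, Matrix.diag, Matrix.mul_apply]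

lemma trace_sq_selMatrix_mul_mul_selMatrix {n : ℕ} (ε : Fin n → Bool)
    (A : Matrix (Fin n) (Fin n) ℂ) :
    ((selMatrix n ε * A * selMatrix n ε) ^ 2).trace =
      ∑ i, ∑ j, (if ε i ∧ ε j then 1 else 0) * (A i j * A j i) := by
  simp only [Matrix.trace_sq, selMatrix_mul_mul_selMatrix_apply]
  refine sum_congr rfl fun i _ => sum_congr rfl fun j _ => ?_
  by_cases hi : ε i <;> by_cases hj : ε j <;> simp [hi, hj]

lemma bernExp_trace_sq_selMatrix_mul_mul_selMatrix {n : ℕ} (p : ℝ)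
    (A : Matrix (Fin n) (Fin n) ℂ) :
    bernExp n p (fun ε => ((selMatrix n ε * A * selMatrix n ε) ^ 2).trace) =
      ∑ i, ∑ j, (p : ℂ) ^ ({i, j} : Finset _).card * (A i j * A j i) := by
  simp only [trace_sq_selMatrix_mul_mul_selMatrix, bernExp.sum_apply, bernExp.mul_const,
    bernExp.ite_and]

lemma Matrix.IsHermitian.apply_mul_apply {ι : Type*} {A : Matrix ι ι ℂ} (hA : A.IsHermitian)
    (i j : ι) : A i j * A j i = (‖A i j‖ ^ 2 : ℝ) := by
  rw [← hA.apply j i, Complex.star_def, Complex.mul_conj', Complex.ofReal_pow]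

lemma Fintype.sum_sum_eq_of_diag_of_offDiag {ι R : Type*} [Fintype ι] [DecidableEq ι]
    [CommRing R] (f : ι → ι → R) (a b : R) (hdiag : ∀ i, f i i = a)
    (hoff : ∀ i j, i ≠ j → f i j = b) :
    ∑ i, ∑ j, f i j = Fintype.card ι * a + Fintype.card ι * (Fintype.card ι - 1) * b := by
  have row : ∀ i, ∑ j, f i j = a + (Fintype.card ι - 1) * b := fun i => by
    rw [Fintype.sum_eq_add_sum_compl i, hdiag,
      Finset.sum_congr rfl fun j (hj : j ∈ ({i}ᶜ : Finset ι)) =>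
        hoff i j (by simpa [eq_comm] using hj),
      Finset.sum_const, Finset.card_compl, card_singleton, nsmul_eq_mul,
      Nat.cast_sub (Fintype.card_pos_iff.2 ⟨i⟩), Nat.cast_one]
  simp only [row, sum_const, card_univ, nsmul_eq_mul]
  ring

lemma tendsto_natCast_mul_sub_one_div_sq (c : ℝ) :
    Tendsto (fun N : ℕ => (N : ℝ) * (N - 1) * c / N ^ 2) atTop (𝓝 c) := by
  have h : Tendsto (fun N : ℕ => c * (1 - 1 / (N : ℝ))) atTop (𝓝 (c * (1 - 0))) :=
    tendsto_const_nhds.mul (tendsto_const_nhds.sub tendsto_one_div_atTop_nhds_zero_nat)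
  rw [sub_zero, mul_one] at h
  refine h.congr' ?_
  filter_upwards [eventually_ne_atTop 0] with N hN
  field_simp

theorem stmt_10_general (n : ℕ) (s : ℝ)
    (p : ℝ)
    (S : Matrix (Fin n) (Fin n) ℂ) (hherm : S.conjTranspose = S)
    (hdiag : ∀ i, S i i = ((Real.sqrt ((n : ℝ) - 1) * s : ℝ) : ℂ))
    (hoff : ∀ i j : Fin n, i ≠ j → ‖S i j‖ = 1) :
    bernExp n p (fun ε => Matrix.trace ((selMatrix n ε * S * selMatrix n ε) ^ 2)) =
        (((n : ℝ) * ((n : ℝ) - 1) * s ^ 2 * p + (n : ℝ) * ((n : ℝ) - 1) * p ^ 2 : ℝ) : ℂ) ∧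
      Filter.Tendsto
        (fun N : ℕ =>
          ((N : ℝ) * ((N : ℝ) - 1) * s ^ 2 * p + (N : ℝ) * ((N : ℝ) - 1) * p ^ 2) / (N : ℝ) ^ 2)
        Filter.atTop (nhds (s ^ 2 * p + p ^ 2)) := by
  have hS : S.IsHermitian := hherm
  refine ⟨?_, ?_⟩
  · rw [bernExp_trace_sq_selMatrix_mul_mul_selMatrix]
    refine (Fintype.sum_sum_eq_of_diag_of_offDiag
      (fun i j => (p : ℂ) ^ ({i, j} : Finset _).card * (S i j * S j i))
      (p * ((n - 1) * s ^ 2)) (p ^ 2) ?_ ?_).trans ?_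
    · intro i
      have hn : (1 : ℝ) ≤ n := by exact_mod_cast i.pos
      rw [hS.apply_mul_apply, hdiag, insert_eq_of_mem (mem_singleton_self i), card_singleton,
        Complex.norm_real, Real.norm_eq_abs, sq_abs, mul_pow, Real.sq_sqrt (sub_nonneg.2 hn)]
      push_cast
      ring
    · intro i j hij
      rw [hS.apply_mul_apply, hoff i j hij, card_pair hij]
      simp
    · simp only [Fintype.card_fin]
      push_cast
      ring
  · convert tendsto_natCast_mul_sub_one_div_sq (s ^ 2 * p + p ^ 2) using 2
    ring

theorem stmt_10 (n : ℕ) (x : ℝ) (hx : 0 < x) (s : ℝ)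
    (hs : s = (1 - x) / (2 * Real.sqrt x))
    (p : ℝ) (hp0 : 0 ≤ p) (hp1 : p ≤ 1)
    (S : Matrix (Fin n) (Fin n) ℂ) (hherm : S.conjTranspose = S)
    (hdiag : ∀ i, S i i = ((Real.sqrt ((n : ℝ) - 1) * s : ℝ) : ℂ))
    (hoff : ∀ i j : Fin n, i ≠ j → ‖S i j‖ = 1)
    (hsq : S * S = ((((n : ℝ) - 1) * (x + 1) ^ 2 / (4 * x) : ℝ) : ℂ) • 1) :
    bernExp n p (fun ε => Matrix.trace ((selMatrix n ε * S * selMatrix n ε) ^ 2)) =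
        (((n : ℝ) * ((n : ℝ) - 1) * s ^ 2 * p + (n : ℝ) * ((n : ℝ) - 1) * p ^ 2 : ℝ) : ℂ) ∧
      Filter.Tendsto
        (fun N : ℕ =>
          ((N : ℝ) * ((N : ℝ) - 1) * s ^ 2 * p + (N : ℝ) * ((N : ℝ) - 1) * p ^ 2) / (N : ℝ) ^ 2)
        Filter.atTop (nhds (s ^ 2 * p + p ^ 2)) :=
  stmt_10_general n s p S hherm hdiag hoff
end

section
/- Let ε_1, …, ε_n be i.i.d. Bernoulli(p) random variables and S an n × n complex matrix. Then E[trace((PSP)^k)] = ∑ over functions a : Fin k → Fin n of p^{|range(a)|} * ∏_{j} S_{a(j), a(j+1 mod k)}, where |range(a)| is the number of distinct values taken by a. -/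
open Finset

theorem Fin.snoc_apply_eq_cons_apply_add_one {α : Type*} {m : ℕ} (x : α) (a : Fin m → α)
    (t : Fin (m + 1)) :
    (Fin.snoc a x : Fin (m + 1) → α) t = (Fin.cons x a : Fin (m + 1) → α) (t + 1) := by
  induction t using Fin.lastCases with
  | last => simp
  | cast s => simp

namespace Matrix

variable {ι R : Type*} [Fintype ι] [DecidableEq ι] [CommSemiring R]

theorem pow_succ_apply_eq_sum_walks (A : Matrix ι ι R) (m : ℕ) (i j : ι) :
    (A ^ (m + 1)) i j =
      ∑ a : Fin m → ι, ∏ t : Fin (m + 1),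
        A ((Fin.cons i a : Fin (m + 1) → ι) t) ((Fin.snoc a j : Fin (m + 1) → ι) t) := by
  induction m generalizing i with
  | zero => simp [Fin.snoc]
  | succ m ih =>
    rw [pow_succ', mul_apply, ← (Fin.consEquiv fun _ => ι).sum_comp, Fintype.sum_prod_type]
    refine Fintype.sum_congr _ _ fun x => ?_
    simp only [ih, Finset.mul_sum]
    refine Fintype.sum_congr _ _ fun a => ?_
    simp [Fin.prod_univ_succ, Fin.consEquiv, ← Fin.cons_snoc_eq_snoc_cons]

theorem trace_pow_succ_eq_sum_cycles (A : Matrix ι ι R) (m : ℕ) :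
    (A ^ (m + 1)).trace = ∑ a : Fin (m + 1) → ι, ∏ t, A (a t) (a (t + 1)) := by
  simp only [trace, diag_apply, pow_succ_apply_eq_sum_walks, Fin.snoc_apply_eq_cons_apply_add_one]
  rw [← (Fin.consEquiv fun _ => ι).sum_comp, Fintype.sum_prod_type]
  rfl

theorem prod_cycle_diagonal_mul_mul_diagonal (d : ι → R) (S : Matrix ι ι R)
    {m : ℕ} (a : Fin (m + 1) → ι) :
    ∏ t, (diagonal d * S * diagonal d) (a t) (a (t + 1)) =
      (∏ t, d (a t)) ^ 2 * ∏ t, S (a t) (a (t + 1)) := by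
  have hshift : ∏ t, d (a (t + 1)) = ∏ t, d (a t) :=
    Equiv.prod_comp (Equiv.addRight (1 : Fin (m + 1))) fun t => d (a t)
  simp only [mul_diagonal, diagonal_mul, prod_mul_distrib, hshift]
  ring

end Matrix

theorem prod_cycle_selMatrix_mul_mul_selMatrix {n k : ℕ} (ε : Fin n → Bool)
    (S : Matrix (Fin n) (Fin n) ℂ) (a : Fin (k + 1) → Fin n) :
    ∏ j, (selMatrix n ε * S * selMatrix n ε) (a j) (a (j + 1)) =
      (∏ i ∈ univ.image a, if ε i then 1 else 0) * ∏ j, S (a j) (a (j + 1)) := by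
  rw [selMatrix, Matrix.prod_cycle_diagonal_mul_mul_diagonal]
  congr 1
  simp [Finset.prod_boole, ite_pow]

section bernExp

variable {n : ℕ} {p : ℝ}

theorem bernExp_sum {α : Type*} (s : Finset α) (f : α → (Fin n → Bool) → ℂ) :
    bernExp n p (fun ε => ∑ a ∈ s, f a ε) = ∑ a ∈ s, bernExp n p (f a) := by
  simp only [bernExp, Finset.mul_sum]
  exact Finset.sum_comm

theorem bernExp_mul_const (f : (Fin n → Bool) → ℂ) (c : ℂ) :
    bernExp n p (fun ε => f ε * c) = bernExp n p f * c := by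
  simp only [bernExp, Finset.sum_mul, mul_assoc]

theorem bernExp_prod_indicator (T : Finset (Fin n)) :
    bernExp n p (fun ε => ∏ i ∈ T, if ε i then 1 else 0) = (p : ℂ) ^ T.card := by
  have hfactor : ∀ ε : Fin n → Bool,
      ((∏ i, if ε i then p else 1 - p : ℝ) : ℂ) * ∏ i ∈ T, (if ε i then 1 else 0) =
        ∏ i, (if ε i then (p : ℂ) else 1 - p) * (if i ∈ T then (if ε i then 1 else 0) else 1) := by
    intro ε
    rw [prod_mul_distrib, prod_ite_mem, univ_inter]
    push_cast [apply_ite]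
    rfl
  simp only [bernExp, hfactor]
  rw [← Fintype.prod_sum fun i (b : Bool) =>
    (if b then (p : ℂ) else 1 - p) * (if i ∈ T then (if b then 1 else 0) else 1)]
  have hsum : ∀ i, ∑ b : Bool, (if b then (p : ℂ) else 1 - p) *
      (if i ∈ T then (if b then 1 else 0) else 1) = if i ∈ T then (p : ℂ) else 1 := by
    intro i
    split_ifs <;> simp
  simp only [hsum, Fintype.prod_ite_mem, prod_const]

end bernExp

theorem stmt_11_general (n k : ℕ) (p : ℝ)
    (S : Matrix (Fin n) (Fin n) ℂ) :
    bernExp n p (fun ε => Matrix.trace ((selMatrix n ε * S * selMatrix n ε) ^ (k + 1))) =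
      ∑ a : Fin (k + 1) → Fin n,
        ((p : ℂ) ^ (Finset.univ.image a).card) * ∏ j : Fin (k + 1), S (a j) (a (j + 1)) := by
  simp only [Matrix.trace_pow_succ_eq_sum_cycles, prod_cycle_selMatrix_mul_mul_selMatrix,
    bernExp_sum, bernExp_mul_const, bernExp_prod_indicator]

theorem stmt_11 (n k : ℕ) (p : ℝ) (hp0 : 0 ≤ p) (hp1 : p ≤ 1)
    (S : Matrix (Fin n) (Fin n) ℂ) :
    bernExp n p (fun ε => Matrix.trace ((selMatrix n ε * S * selMatrix n ε) ^ (k + 1))) =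
      ∑ a : Fin (k + 1) → Fin n,
        ((p : ℂ) ^ (Finset.univ.image a).card) * ∏ j : Fin (k + 1), S (a j) (a (j + 1)) :=
  stmt_11_general n k p S
end

section
/- Let S be an n × n complex matrix with every diagonal entry equal to d, and let π be a partition of [k] containing two cyclically consecutive indices j, j+1 in the same block. Then for every a ∈ L_n(π), the cyclic product ∏_i S_{a(i),a(i+1)} equals d times the corresponding cyclic product of length k-1 with index j removed; consequently ∑_{a ∈ L_n(π)} ∏_i S_{a(i),a(i+1)} = d · ∑_{a' ∈ L_n(π')} ∏_i S_{a'(i),a'(i+1)}, where π' is π restricted to [k] \ {j}. -/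
/-- The set of maps `a : Fin k → Fin n` whose level sets (fibers) are exactly the
blocks of the partition `P`. -/
def levelSetMaps (n k : ℕ) (P : Finpartition (Finset.univ : Finset (Fin k))) :
    Finset (Fin k → Fin n) :=
  Finset.univ.filter fun a =>
    Finset.image (fun i => Finset.univ.filter fun j => a j = a i) Finset.univ = P.parts

/-! Deleting `j` from the cycle `0 → 1 → ⋯ → k+1 → 0` gives the cycle on the remaining
indices; its only new edge is `j - 1 → j + 1`, which replaces the path `j - 1 → j → j + 1`.
So if `f j = f (j + 1)`, the cyclic product of `g (f i) (f (i + 1))` splits off the factor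
`g (f j) (f j)` and what remains is the cyclic product over `Fin (k + 1)` read through
`j.succAbove`. -/

lemma Fin.succAbove_add_one_eq_or {k : ℕ} (j : Fin (k + 2)) (i : Fin (k + 1)) :
    j.succAbove (i + 1) = j.succAbove i + 1 ∨
      (j.succAbove i + 1 = j ∧ j.succAbove (i + 1) = j + 1) := by
  simp only [Fin.succAbove, Fin.ext_iff, Fin.lt_def, apply_ite Fin.val, Fin.val_castSucc,
    Fin.val_succ, Fin.val_add_one, Fin.val_last]
  split_ifs <;> omega

lemma Fin.prod_cycle_eq_mul_prod_succAbove {M α : Type*} [CommMonoid M] {k : ℕ}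
    (g : α → α → M) (f : Fin (k + 2) → α) (j : Fin (k + 2)) (hj : f j = f (j + 1)) :
    ∏ i, g (f i) (f (i + 1)) =
      g (f j) (f j) * ∏ i : Fin (k + 1), g (f (j.succAbove i)) (f (j.succAbove (i + 1))) := by
  rw [Fin.prod_univ_succAbove _ j, ← hj]
  congr 1
  refine Finset.prod_congr rfl fun i _ => ?_
  rcases j.succAbove_add_one_eq_or i with h | ⟨h₁, h₂⟩
  · rw [h]
  · rw [h₁, h₂, hj]

lemma apply_eq_of_mem_levelSetMaps {n k : ℕ} {P : Finpartition (Finset.univ : Finset (Fin k))}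
    {a : Fin k → Fin n} (ha : a ∈ levelSetMaps n k P) {B : Finset (Fin k)} (hB : B ∈ P.parts)
    {x y : Fin k} (hx : x ∈ B) (hy : y ∈ B) : a x = a y := by
  rw [levelSetMaps, Finset.mem_filter, Finset.ext_iff] at ha
  obtain ⟨i, -, rfl⟩ := Finset.mem_image.mp ((ha.2 B).mpr hB)
  rw [(Finset.mem_filter.mp hx).2, (Finset.mem_filter.mp hy).2]

theorem stmt_18 (n k : ℕ) (d : ℂ)
    (S : Matrix (Fin n) (Fin n) ℂ) (hdiag : ∀ i, S i i = d)
    (P : Finpartition (Finset.univ : Finset (Fin (k + 2))))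
    (j : Fin (k + 2)) (hjj : ∃ B ∈ P.parts, j ∈ B ∧ j + 1 ∈ B) :
    (∀ a ∈ levelSetMaps n (k + 2) P,
        ∏ i : Fin (k + 2), S (a i) (a (i + 1)) =
          d * ∏ i : Fin (k + 1), S (a (j.succAbove i)) (a (j.succAbove (i + 1)))) ∧
      ∑ a ∈ levelSetMaps n (k + 2) P, ∏ i : Fin (k + 2), S (a i) (a (i + 1)) =
        d * ∑ a ∈ levelSetMaps n (k + 2) P,
          ∏ i : Fin (k + 1), S (a (j.succAbove i)) (a (j.succAbove (i + 1))) := by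
  obtain ⟨B, hB, hjB, hj₁B⟩ := hjj
  have termwise : ∀ a ∈ levelSetMaps n (k + 2) P,
      ∏ i : Fin (k + 2), S (a i) (a (i + 1)) =
        d * ∏ i : Fin (k + 1), S (a (j.succAbove i)) (a (j.succAbove (i + 1))) := by
    intro a ha
    rw [Fin.prod_cycle_eq_mul_prod_succAbove S a j
      (apply_eq_of_mem_levelSetMaps ha hB hjB hj₁B), hdiag]
  exact ⟨termwise, by rw [Finset.mul_sum]; exact Finset.sum_congr rfl termwise⟩
end
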